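/- Characterization of maximal weighted sparsity: let n ≥ 2, let w ∈ ℝⁿ have all entries strictly positive, and let x ∈ ℝⁿ be nonzero. Then spar_w(x) = 1 if and only if x has exactly one nonzero entry and this nonzero entry is at an index j with w(j) = minᵢ w(i). -/
import Mathlib


/-- The ℓ₁ norm of a vector in ℝⁿ. -/
noncomputable def l1norm {n : ℕ} (x : Fin n → ℝ) : ℝ := ∑ j, |x j|

/-- The ℓ₂ norm of a vector in ℝⁿ. -/
noncomputable def l2norm {n : ℕ} (x : Fin n → ℝ) : ℝ := Real.sqrt (∑ j, (x j) ^ 2)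

/-- The sparsity measure spar(x) = (√n − ‖x‖₁/‖x‖₂)/(√n − 1). -/
noncomputable def spar {n : ℕ} (x : Fin n → ℝ) : ℝ :=
  (Real.sqrt n - l1norm x / l2norm x) / (Real.sqrt n - 1)


/-- Characterization of maximal weighted sparsity: for n ≥ 2, w > 0 and x ≠ 0,
spar_w(x) = 1 iff x has exactly one nonzero entry and that entry is at an index j
with w(j) = minᵢ w(i). -/
theorem weighted_spar_eq_one_iff {n : ℕ} (hn : 2 ≤ n) (w : Fin n → ℝ)
    (hw : ∀ i, 0 < w i) (x : Fin n → ℝ) (hx : x ≠ 0) :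
    let wmin : ℝ := Finset.univ.inf' (Finset.univ_nonempty_iff.mpr ⟨⟨0, by omega⟩⟩) w
    ((l2norm w - (∑ j, w j * |x j|) / l2norm x) / (l2norm w - wmin) = 1 ↔
      ∃ j : Fin n, x j ≠ 0 ∧ w j = wmin ∧ ∀ k, k ≠ j → x k = 0) := by
  intro wmin
  obtain ⟨i0, hi0⟩ : ∃ j, x j ≠ 0 := by
    by_contra h
    push_neg at h
    exact hx (funext h)
  have hwmin_le : ∀ i, wmin ≤ w i := fun i => Finset.inf'_le _ (Finset.mem_univ i)
  obtain ⟨im, -, him⟩ := Finset.exists_mem_eq_inf'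
    (Finset.univ_nonempty_iff.mpr ⟨⟨0, by omega⟩⟩) w
  have hwmin_pos : 0 < wmin := by
    have : wmin = w im := him
    rw [this]; exact hw im
  have hQx : 0 < ∑ j, (x j) ^ 2 := by
    apply Finset.sum_pos' (fun i _ => sq_nonneg _)
    exact ⟨i0, Finset.mem_univ _, by positivity⟩
  have hL : 0 < l2norm x := Real.sqrt_pos.mpr hQx
  have hn' : (2 : ℝ) ≤ (n : ℝ) := by exact_mod_cast hn
  have hA : wmin < l2norm w := by
    rw [l2norm, ← Real.sqrt_sq hwmin_pos.le]
    apply Real.sqrt_lt_sqrt (sq_nonneg _)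
    calc wmin ^ 2 < 2 * wmin ^ 2 := by nlinarith
      _ ≤ ∑ _j : Fin n, wmin ^ 2 := by
          rw [Finset.sum_const, Finset.card_univ, Fintype.card_fin, nsmul_eq_mul]
          nlinarith
      _ ≤ ∑ j, (w j) ^ 2 := Finset.sum_le_sum fun i _ => by
          nlinarith [hwmin_le i, hw i, hwmin_pos]
  set S : ℝ := ∑ j, w j * |x j| with hS_def
  have key : (l2norm w - S / l2norm x) / (l2norm w - wmin) = 1 ↔ S = wmin * l2norm x := by
    rw [div_eq_one_iff_eq (by linarith : l2norm w - wmin ≠ 0)]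
    constructor
    · intro h
      have h2 : S / l2norm x = wmin := by linarith
      rw [div_eq_iff hL.ne'] at h2
      linarith
    · intro h
      have : S / l2norm x = wmin := by
        rw [h]; field_simp
      linarith
  rw [key]
  constructor
  · intro h
    set T : ℝ := ∑ j, |x j| with hT_def
    have hT_nonneg : 0 ≤ T := Finset.sum_nonneg fun i _ => abs_nonneg _
    have hT_ge : ∀ i, |x i| ≤ T := by
      intro i
      rw [hT_def]
      exact Finset.single_le_sum (fun i _ => abs_nonneg (x i)) (Finset.mem_univ i)
    have hQT : ∑ j, (x j) ^ 2 ≤ T * T := by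
      calc ∑ j, (x j) ^ 2 ≤ ∑ j, |x j| * T := by
            apply Finset.sum_le_sum
            intro i _
            rw [← sq_abs]
            nlinarith [abs_nonneg (x i), hT_ge i]
        _ = T * T := by rw [← Finset.sum_mul]
    have hLT : l2norm x ≤ T := by
      rw [l2norm]
      calc Real.sqrt (∑ j, (x j) ^ 2) ≤ Real.sqrt (T * T) := Real.sqrt_le_sqrt hQT
        _ = T := by rw [← sq, Real.sqrt_sq hT_nonneg]
    have hS_ge : wmin * T ≤ S := by
      rw [hT_def, Finset.mul_sum]
      exact Finset.sum_le_sum fun i _ =>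
        mul_le_mul_of_nonneg_right (hwmin_le i) (abs_nonneg _)
    have hTL : T = l2norm x := by
      have : wmin * T ≤ wmin * l2norm x := h ▸ hS_ge
      have := le_of_mul_le_mul_left this hwmin_pos
      linarith
    have hT2Q : T * T = ∑ j, (x j) ^ 2 := by
      rw [hTL, ← sq]
      exact Real.sq_sqrt hQx.le
    have hptw1 : ∀ i ∈ Finset.univ, (w i - wmin) * |x i| = 0 := by
      rw [← Finset.sum_eq_zero_iff_of_nonneg
        (fun i _ => mul_nonneg (by linarith [hwmin_le i]) (abs_nonneg _))]
      have : ∑ i, (w i - wmin) * |x i| = S - wmin * T := by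
        rw [hS_def, hT_def, Finset.mul_sum, ← Finset.sum_sub_distrib]
        congr 1; funext i; ring
      rw [this, h, hTL]; ring
    have hptw2 : ∀ i ∈ Finset.univ, |x i| * (T - |x i|) = 0 := by
      rw [← Finset.sum_eq_zero_iff_of_nonneg
        (fun i _ => mul_nonneg (abs_nonneg _) (by linarith [hT_ge i]))]
      have e1 : ∑ i, |x i| * (T - |x i|) = (∑ i, |x i|) * T - ∑ i, (x i) ^ 2 := by
        rw [Finset.sum_mul, ← Finset.sum_sub_distrib]
        congr 1; funext i; rw [← sq_abs]; ring
      rw [e1, ← hT_def, hT2Q]; ring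
    refine ⟨i0, hi0, ?_, ?_⟩
    · have := hptw1 i0 (Finset.mem_univ i0)
      rcases mul_eq_zero.mp this with h1 | h1
      · linarith
      · exact absurd (abs_eq_zero.mp h1) hi0
    · intro k hk
      by_contra hxk
      have h2 : |x i0| = T := by
        have := hptw2 i0 (Finset.mem_univ i0)
        rcases mul_eq_zero.mp this with h1 | h1
        · exact absurd (abs_eq_zero.mp h1) hi0
        · linarith
      have h3 : |x k| = T := by
        have := hptw2 k (Finset.mem_univ k)
        rcases mul_eq_zero.mp this with h1 | h1
        · exact absurd (abs_eq_zero.mp h1) hxk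
        · linarith
      have hTpos : 0 < T := h2 ▸ abs_pos.mpr hi0
      have hpair : |x k| + |x i0| ≤ T := by
        calc |x k| + |x i0| = ∑ j ∈ ({k, i0} : Finset (Fin n)), |x j| :=
              (Finset.sum_pair (f := fun j => |x j|) hk).symm
          _ ≤ ∑ j, |x j| := Finset.sum_le_sum_of_subset_of_nonneg
              (Finset.subset_univ _) (fun i _ _ => abs_nonneg _)
          _ = T := hT_def.symm
      rw [h2, h3] at hpair
      linarith
  · rintro ⟨j, hj, hwj, hk⟩
    have hS : S = w j * |x j| := by
      rw [hS_def]
      apply Finset.sum_eq_single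
      · intro k _ hkj
        rw [hk k hkj]; simp
      · intro h; exact absurd (Finset.mem_univ j) h
    have hL2 : l2norm x = |x j| := by
      rw [l2norm]
      have : ∑ i, (x i) ^ 2 = (x j) ^ 2 := by
        apply Finset.sum_eq_single
        · intro k _ hkj
          rw [hk k hkj]; simp
        · intro h; exact absurd (Finset.mem_univ j) h
      rw [this, Real.sqrt_sq_eq_abs]
    rw [hS, hL2, hwj]
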